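/- Every pair (P,Q) of commuting ordinary differential operators with coefficients in C[[x]], at least one of which is monic of positive order, is algebraically dependent over C: there exists a nonzero polynomial F(z,w) in C[z,w] with F(P,Q) = 0. -/

import Mathlib

/- Ordinary differential operators with coefficients in ℂ[[x]], realized as
ℂ-linear endomorphisms of ℂ[[x]] generated by multiplication operators and d/dx. -/

noncomputable section

abbrev PS := PowerSeries ℂ

/-- Multiplication by a power series, as a ℂ-linear endomorphism of ℂ[[x]]. -/
def mulOp (u : PS) : Module.End ℂ PS :=
  { toFun := fun g => u * g
    map_add' := mul_add u
    map_smul' := by intros; exact (Algebra.mul_smul_comm _ _ _) }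

/-- Formal differentiation ∂ₓ as a ℂ-linear endomorphism of ℂ[[x]]. -/
def derOp : Module.End ℂ PS := (PowerSeries.derivative (R := ℂ)).toLinearMap

/-- The space of ordinary differential operators of order at most `n`:
the ℂ-span of the operators `u(x) ∘ ∂ₓ^i`, `i ≤ n`. -/
def Dfil (n : ℕ) : Submodule ℂ (Module.End ℂ PS) :=
  Submodule.span ℂ {L | ∃ (u : PS) (i : ℕ), i ≤ n ∧ L = mulOp u * derOp ^ i}

/-- The algebra `D = ℂ[[x]][∂ₓ]` of ordinary differential operators. -/
def DiffOps : Subalgebra ℂ (Module.End ℂ PS) :=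
  Algebra.adjoin ℂ (Set.range mulOp ∪ {derOp})

/-- The order of a differential operator (junk value for non-differential operators). -/
def ordD (L : Module.End ℂ PS) : ℕ := sInf {n | L ∈ Dfil n}

/-- A differential operator is monic if its leading coefficient is `1`, i.e. if
subtracting `∂ₓ^(ord L)` lowers the order (for order `0` this means `L = 1`). -/
def MonicD (L : Module.End ℂ PS) : Prop :=
  L ∈ Dfil (ordD L) ∧
    (if ordD L = 0 then L = 1 else L - derOp ^ ordD L ∈ Dfil (ordD L - 1))

/-- Evaluation of a two-variable polynomial `F(z,w)` at a pair of elements of a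
(not necessarily commutative) ℂ-algebra, with all `z`-powers placed to the left. -/
def eval2 {A : Type*} [Ring A] [Algebra ℂ A] (F : MvPolynomial (Fin 2) ℂ) (P Q : A) : A :=
  (AddMonoidAlgebra.coeff F).sum fun m c => c • (P ^ m 0 * Q ^ m 1)

/-!
Write `P = ∂ⁿ⁺¹ + R` with `R` of order at most `n`. If `L` of order `m` commutes with `P`, compare
the coefficients of `∂ⁿ⁺ᵐ` in `[∂ⁿ⁺¹, L] = [L, R]`: on the left it is `(n + 1)` times the derivative
of the leading coefficient of `L`, on the right it vanishes because leading coefficients multiply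
and `ℂ[[x]]` is commutative. So the leading coefficient of `L` is a constant, and descending through
the orders, `L` is determined by the constant terms of its coefficients. Hence the operators of
order at most `N` commuting with `P` form a space of dimension at most `N + 1`, and enough products
`Pⁱ Qʲ` lie in it to force a linear relation among them, which is a polynomial relation.
-/

open PowerSeries

lemma mul_eq_mulOp (u : PS) : LinearMap.mul ℂ PS u = mulOp u := rfl

lemma mulOp_mul (u v : PS) : mulOp u * mulOp v = mulOp (u * v) := by
  simp only [← mul_eq_mulOp, ← Algebra.coe_lmul_eq_mul, map_mul]

lemma mulOp_one : mulOp 1 = 1 := by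
  simp only [← mul_eq_mulOp, ← Algebra.coe_lmul_eq_mul, map_one]

lemma mulOp_zero : mulOp 0 = 0 := by
  simp only [← mul_eq_mulOp, map_zero]

lemma derOp_mul_mulOp (u : PS) : derOp * mulOp u = mulOp u * derOp + mulOp (d⁄dX ℂ u) := by
  ext g : 1
  simp [derOp, ← mul_eq_mulOp, Derivation.leibniz, mul_comm]

lemma lie_derOp_mulOp_mul_derOp_pow (u : PS) (i : ℕ) :
    ⁅derOp, mulOp u * derOp ^ i⁆ = mulOp (d⁄dX ℂ u) * derOp ^ i := by
  rw [Ring.lie_def, ← mul_assoc, derOp_mul_mulOp, add_mul, mul_assoc, ← pow_succ', mul_assoc,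
    ← pow_succ]
  abel

section Filtration

lemma mulOp_mul_derOp_pow_mem_Dfil (u : PS) {i n : ℕ} (h : i ≤ n) :
    mulOp u * derOp ^ i ∈ Dfil n :=
  Submodule.subset_span ⟨u, i, h, rfl⟩

lemma Dfil_mono : Monotone Dfil := fun _ _ h =>
  Submodule.span_mono (by rintro _ ⟨u, i, hi, rfl⟩; exact ⟨u, i, hi.trans h, rfl⟩)

lemma derOp_pow_mem_Dfil {i n : ℕ} (h : i ≤ n) : derOp ^ i ∈ Dfil n := by
  simpa [mulOp_one] using mulOp_mul_derOp_pow_mem_Dfil 1 h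

lemma map_mem_of_mem_Dfil {M : Type*} [AddCommMonoid M] [Module ℂ M] {n : ℕ}
    (f : Module.End ℂ PS →ₗ[ℂ] M) {p : Submodule ℂ M}
    (h : ∀ u i, i ≤ n → f (mulOp u * derOp ^ i) ∈ p) {L : Module.End ℂ PS} (hL : L ∈ Dfil n) :
    f L ∈ p :=
  (Submodule.span_le (p := p.comap f)).mpr (by rintro _ ⟨u, i, hi, rfl⟩; exact h u i hi) hL

lemma eqOn_Dfil {M : Type*} [AddCommMonoid M] [Module ℂ M] {n : ℕ}
    {f g : Module.End ℂ PS →ₗ[ℂ] M}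
    (h : ∀ u i, i ≤ n → f (mulOp u * derOp ^ i) = g (mulOp u * derOp ^ i)) :
    Set.EqOn f g (Dfil n) :=
  LinearMap.eqOn_span (by rintro _ ⟨u, i, hi, rfl⟩; exact h u i hi)

variable {L M : Module.End ℂ PS} {a b n : ℕ}

lemma mulOp_mul_mem_Dfil (u : PS) (hL : L ∈ Dfil n) : mulOp u * L ∈ Dfil n :=
  map_mem_of_mem_Dfil (LinearMap.mulLeft ℂ (mulOp u)) (fun v i hi => by
    rw [LinearMap.mulLeft_apply, ← mul_assoc, mulOp_mul]
    exact mulOp_mul_derOp_pow_mem_Dfil _ hi) hL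

lemma derOp_mul_mem_Dfil (hL : L ∈ Dfil n) : derOp * L ∈ Dfil (n + 1) :=
  map_mem_of_mem_Dfil (LinearMap.mulLeft ℂ derOp) (fun u i hi => by
    rw [LinearMap.mulLeft_apply, ← mul_assoc, derOp_mul_mulOp, add_mul, mul_assoc, ← pow_succ']
    exact add_mem (mulOp_mul_derOp_pow_mem_Dfil _ (by omega))
      (mulOp_mul_derOp_pow_mem_Dfil _ (by omega))) hL

lemma derOp_pow_mul_mem_Dfil (hL : L ∈ Dfil n) (i : ℕ) : derOp ^ i * L ∈ Dfil (i + n) := by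
  induction i with
  | zero => simpa using hL
  | succ i ih =>
    rw [pow_succ', mul_assoc, add_right_comm]
    exact derOp_mul_mem_Dfil ih

lemma mul_mem_Dfil (hL : L ∈ Dfil a) (hM : M ∈ Dfil b) : L * M ∈ Dfil (a + b) :=
  map_mem_of_mem_Dfil (LinearMap.mulRight ℂ M) (fun u i hi => by
    rw [LinearMap.mulRight_apply, mul_assoc]
    exact mulOp_mul_mem_Dfil u (Dfil_mono (by omega) (derOp_pow_mul_mem_Dfil hM i))) hL

instance : SetLike.GradedMonoid Dfil where
  one_mem := by simpa using derOp_pow_mem_Dfil (le_refl 0)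
  mul_mem _ _ _ _ := mul_mem_Dfil

lemma exists_mem_Dfil_of_mem_DiffOps (hL : L ∈ DiffOps) : ∃ n, L ∈ Dfil n := by
  induction hL using Algebra.adjoin_induction with
  | mem x hx =>
    obtain ⟨u, rfl⟩ | rfl := hx
    · exact ⟨0, by simpa using mulOp_mul_derOp_pow_mem_Dfil u (le_refl 0)⟩
    · exact ⟨1, by simpa using derOp_pow_mem_Dfil (le_refl 1)⟩
  | algebraMap r =>
    exact ⟨0, by simpa [Algebra.algebraMap_eq_smul_one] using
      Submodule.smul_mem _ r SetLike.GradedOne.one_mem⟩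
  | add x y _ _ hx hy =>
    obtain ⟨a, hx⟩ := hx
    obtain ⟨b, hy⟩ := hy
    exact ⟨max a b, add_mem (Dfil_mono (le_max_left a b) hx) (Dfil_mono (le_max_right a b) hy)⟩
  | mul x y _ _ hx hy =>
    obtain ⟨a, hx⟩ := hx
    obtain ⟨b, hy⟩ := hy
    exact ⟨a + b, mul_mem_Dfil hx hy⟩

end Filtration

section Coefficients

def dividedPowX (k : ℕ) : PS := monomial k (k.factorial : ℂ)⁻¹

lemma derOp_dividedPowX_succ (k : ℕ) : derOp (dividedPowX (k + 1)) = dividedPowX k := by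
  ext n
  change coeff n (d⁄dX ℂ _) = _
  rw [coeff_derivative, dividedPowX, dividedPowX, coeff_monomial, coeff_monomial]
  by_cases h : n = k
  · subst h
    rw [if_pos rfl, if_pos rfl, Nat.factorial_succ, Nat.cast_mul]
    field_simp
    push_cast
    ring
  · rw [if_neg (by omega), if_neg h, zero_mul]

lemma derOp_dividedPowX_zero : derOp (dividedPowX 0) = 0 := by
  simp [derOp, dividedPowX]

lemma derOp_pow_dividedPowX (j k : ℕ) :
    (derOp ^ j) (dividedPowX k) = if j ≤ k then dividedPowX (k - j) else 0 := by
  induction j with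
  | zero => simp
  | succ j ih =>
    rw [pow_succ', Module.End.mul_apply, ih]
    rcases lt_trichotomy j k with h | rfl | h
    · obtain ⟨d, rfl⟩ := Nat.exists_eq_add_of_lt h
      rw [if_pos h.le, if_pos (by omega), show j + d + 1 - j = d + 1 by omega,
        derOp_dividedPowX_succ]
      congr 1
      omega
    · simp [derOp_dividedPowX_zero]
    · rw [if_neg (by omega), if_neg (by omega), map_zero]

/-- Since `(∑ uᵢ ∂ⁱ) (Xᵏ/k!) = ∑_{i ≤ k} uᵢ X^(k-i)/(k-i)!`, the coefficients `uₖ` of an operator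
can be read off recursively from its values on the divided powers. -/
def opCoeff : ℕ → Module.End ℂ PS →ₗ[ℂ] PS
  | k => LinearMap.applyₗ (dividedPowX k) -
      ∑ i : Fin k, LinearMap.mulRight ℂ (dividedPowX (k - i)) ∘ₗ opCoeff i

lemma opCoeff_apply (k : ℕ) (L : Module.End ℂ PS) :
    opCoeff k L = L (dividedPowX k) - ∑ i ∈ Finset.range k, opCoeff i L * dividedPowX (k - i) := by
  rw [opCoeff]
  simp [Fin.sum_univ_eq_sum_range (fun i => opCoeff i L * dividedPowX (k - i))]

lemma opCoeff_mulOp_mul (u : PS) (L : Module.End ℂ PS) (k : ℕ) :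
    opCoeff k (mulOp u * L) = u * opCoeff k L := by
  induction k using Nat.strong_induction_on with
  | _ k ih =>
    rw [opCoeff_apply, opCoeff_apply, mul_sub, Finset.mul_sum]
    congr 1
    refine Finset.sum_congr rfl fun i hi => ?_
    rw [ih i (Finset.mem_range.mp hi), mul_assoc]

lemma opCoeff_derOp_pow (k j : ℕ) : opCoeff k (derOp ^ j) = if k = j then 1 else 0 := by
  induction k using Nat.strong_induction_on with
  | _ k ih =>
    have hsum : ∑ i ∈ Finset.range k, opCoeff i (derOp ^ j) * dividedPowX (k - i) =
        if j < k then dividedPowX (k - j) else 0 := by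
      rw [Finset.sum_congr rfl fun i hi => by rw [ih i (Finset.mem_range.mp hi)]]
      simp [ite_mul]
    rw [opCoeff_apply, derOp_pow_dividedPowX, hsum]
    rcases lt_trichotomy j k with h | rfl | h
    · simp [h, h.le, h.ne']
    · simp [dividedPowX]
    · simp [h.not_gt, h.not_ge, h.ne]

lemma opCoeff_mulOp_mul_derOp_pow (u : PS) (k j : ℕ) :
    opCoeff k (mulOp u * derOp ^ j) = if k = j then u else 0 := by
  simp [opCoeff_mulOp_mul, opCoeff_derOp_pow]

variable {L : Module.End ℂ PS} {m : ℕ}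

lemma opCoeff_eq_zero_of_lt (hL : L ∈ Dfil m) {k : ℕ} (hk : m < k) : opCoeff k L = 0 :=
  eqOn_Dfil (g := 0) (fun u i hi => by
    rw [opCoeff_mulOp_mul_derOp_pow, if_neg (by omega), LinearMap.zero_apply]) hL

lemma eq_sum_opCoeff (hL : L ∈ Dfil m) :
    L = ∑ i ∈ Finset.range (m + 1), mulOp (opCoeff i L) * derOp ^ i := by
  have := eqOn_Dfil (f := LinearMap.id) (g := ∑ i ∈ Finset.range (m + 1),
      LinearMap.mulRight ℂ (derOp ^ i) ∘ₗ LinearMap.mul ℂ PS ∘ₗ opCoeff i)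
    (fun u j hj => by
      simp [opCoeff_mulOp_mul_derOp_pow, mul_eq_mulOp, apply_ite mulOp, mulOp_zero, ite_mul,
        Nat.lt_succ_of_le hj]) hL
  simpa [mul_eq_mulOp] using this

end Coefficients

section Symbol

variable {L M : Module.End ℂ PS} {a b m n : ℕ}

lemma opCoeff_derOp_mul (hL : L ∈ Dfil n) : opCoeff (n + 1) (derOp * L) = opCoeff n L :=
  eqOn_Dfil (f := opCoeff (n + 1) ∘ₗ LinearMap.mulLeft ℂ derOp) (g := opCoeff n)
    (fun u i hi => by
      rw [LinearMap.comp_apply, LinearMap.mulLeft_apply, ← mul_assoc, derOp_mul_mulOp, add_mul,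
        mul_assoc, ← pow_succ', map_add]
      simp only [opCoeff_mulOp_mul_derOp_pow, if_neg (show n + 1 ≠ i by omega), add_zero]
      simp) hL

lemma opCoeff_derOp_pow_mul (hL : L ∈ Dfil n) (i : ℕ) :
    opCoeff (i + n) (derOp ^ i * L) = opCoeff n L := by
  induction i with
  | zero => simp
  | succ i ih =>
    rw [pow_succ', mul_assoc, add_right_comm, opCoeff_derOp_mul (derOp_pow_mul_mem_Dfil hL i), ih]

lemma opCoeff_mul (hL : L ∈ Dfil a) (hM : M ∈ Dfil b) :
    opCoeff (a + b) (L * M) = opCoeff a L * opCoeff b M :=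
  eqOn_Dfil (f := opCoeff (a + b) ∘ₗ LinearMap.mulRight ℂ M)
    (g := LinearMap.mulRight ℂ (opCoeff b M) ∘ₗ opCoeff a) (fun u i hi => by
      rw [LinearMap.comp_apply, LinearMap.comp_apply, LinearMap.mulRight_apply,
        LinearMap.mulRight_apply, mul_assoc, opCoeff_mulOp_mul, opCoeff_mulOp_mul_derOp_pow]
      rcases hi.eq_or_lt with rfl | hlt
      · rw [opCoeff_derOp_pow_mul hM, if_pos rfl]
      · rw [opCoeff_eq_zero_of_lt (derOp_pow_mul_mem_Dfil hM i) (by omega), if_neg (by omega),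
          mul_zero, zero_mul]) hL

lemma opCoeff_lie_eq_zero (hL : L ∈ Dfil a) (hM : M ∈ Dfil b) : opCoeff (a + b) ⁅L, M⁆ = 0 := by
  rw [Ring.lie_def, map_sub, opCoeff_mul hL hM, add_comm, opCoeff_mul hM hL, mul_comm, sub_self]

lemma lie_derOp_mem_Dfil (hL : L ∈ Dfil m) : ⁅derOp, L⁆ ∈ Dfil m :=
  map_mem_of_mem_Dfil (LinearMap.mulLeft ℂ derOp - LinearMap.mulRight ℂ derOp) (fun u i hi => by
    rw [LinearMap.sub_apply, LinearMap.mulLeft_apply, LinearMap.mulRight_apply, ← Ring.lie_def,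
      lie_derOp_mulOp_mul_derOp_pow]
    exact mulOp_mul_derOp_pow_mem_Dfil _ hi) hL

lemma opCoeff_lie_derOp (hL : L ∈ Dfil m) : opCoeff m ⁅derOp, L⁆ = d⁄dX ℂ (opCoeff m L) :=
  eqOn_Dfil (f := opCoeff m ∘ₗ (LinearMap.mulLeft ℂ derOp - LinearMap.mulRight ℂ derOp))
    (g := (d⁄dX ℂ).toLinearMap ∘ₗ opCoeff m) (fun u i _ => by
      rw [LinearMap.comp_apply, LinearMap.comp_apply, LinearMap.sub_apply, LinearMap.mulLeft_apply,
        LinearMap.mulRight_apply, ← Ring.lie_def, lie_derOp_mulOp_mul_derOp_pow,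
        opCoeff_mulOp_mul_derOp_pow, opCoeff_mulOp_mul_derOp_pow]
      split_ifs <;> simp) hL

lemma mul_lie_eq_mul_lie_add_lie_mul {A : Type*} [Ring A] (x y z : A) :
    ⁅x * y, z⁆ = x * ⁅y, z⁆ + ⁅x, z⁆ * y := by
  simp only [Ring.lie_def]
  noncomm_ring

lemma lie_derOp_pow_succ_mem_Dfil (hL : L ∈ Dfil m) (n : ℕ) :
    ⁅derOp ^ (n + 1), L⁆ ∈ Dfil (n + m) := by
  induction n with
  | zero => simpa using lie_derOp_mem_Dfil hL
  | succ n ih =>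
    rw [pow_succ', mul_lie_eq_mul_lie_add_lie_mul]
    exact add_mem (Dfil_mono (by omega) (derOp_mul_mem_Dfil ih))
      (Dfil_mono (by omega) (mul_mem_Dfil (lie_derOp_mem_Dfil hL) (derOp_pow_mem_Dfil le_rfl)))

lemma opCoeff_lie_derOp_pow_succ (hL : L ∈ Dfil m) (n : ℕ) :
    opCoeff (n + m) ⁅derOp ^ (n + 1), L⁆ = ((n + 1 : ℕ) : ℂ) • d⁄dX ℂ (opCoeff m L) := by
  induction n with
  | zero => simpa using opCoeff_lie_derOp hL
  | succ n ih =>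
    have h₁ : opCoeff (n + 1 + m) (derOp * ⁅derOp ^ (n + 1), L⁆) =
        opCoeff (n + m) ⁅derOp ^ (n + 1), L⁆ := by
      rw [add_right_comm]
      exact opCoeff_derOp_mul (lie_derOp_pow_succ_mem_Dfil hL n)
    have h₂ : opCoeff (n + 1 + m) (⁅derOp, L⁆ * derOp ^ (n + 1)) = d⁄dX ℂ (opCoeff m L) := by
      rw [add_comm _ m, opCoeff_mul (lie_derOp_mem_Dfil hL) (derOp_pow_mem_Dfil le_rfl),
        opCoeff_lie_derOp hL, opCoeff_derOp_pow, if_pos rfl, mul_one]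
    rw [pow_succ', mul_lie_eq_mul_lie_add_lie_mul, map_add, h₁, h₂, ih]
    push_cast
    module

end Symbol

section Centralizer

variable {R L Q : Module.End ℂ PS} {m n q : ℕ}

lemma derivative_opCoeff_eq_zero_of_commute (hR : R ∈ Dfil n) (hL : L ∈ Dfil m)
    (hc : Commute (derOp ^ (n + 1) + R) L) : d⁄dX ℂ (opCoeff m L) = 0 := by
  have hlie : ⁅derOp ^ (n + 1), L⁆ = ⁅L, R⁆ := by
    have := hc.eq
    rw [add_mul, mul_add] at this
    rw [Ring.lie_def, Ring.lie_def, sub_eq_sub_iff_add_eq_add, this, add_comm]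
  have h := opCoeff_lie_derOp_pow_succ hL n
  rw [hlie, add_comm n m, opCoeff_lie_eq_zero hL hR] at h
  exact (smul_eq_zero.mp h.symm).resolve_left (Nat.cast_ne_zero.mpr n.succ_ne_zero)

lemma opCoeff_eq_zero_of_commute (hR : R ∈ Dfil n) (hL : L ∈ Dfil m)
    (hc : Commute (derOp ^ (n + 1) + R) L) (h0 : constantCoeff (opCoeff m L) = 0) :
    opCoeff m L = 0 :=
  derivative.ext (by rw [derivative_opCoeff_eq_zero_of_commute hR hL hc, map_zero])
    (by rw [h0, map_zero])

lemma eq_zero_of_commute (hR : R ∈ Dfil n) (hL : L ∈ Dfil m)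
    (hc : Commute (derOp ^ (n + 1) + R) L) (h0 : ∀ k ≤ m, constantCoeff (opCoeff k L) = 0) :
    L = 0 := by
  induction m generalizing L with
  | zero =>
    rw [eq_sum_opCoeff hL, zero_add, Finset.sum_range_one,
      opCoeff_eq_zero_of_commute hR hL hc (h0 0 le_rfl), mulOp_zero, zero_mul]
  | succ m ih =>
    refine ih ?_ hc fun k hk => h0 k (by omega)
    rw [eq_sum_opCoeff hL, Finset.sum_range_succ,
      opCoeff_eq_zero_of_commute hR hL hc (h0 _ le_rfl), mulOp_zero, zero_mul, add_zero]
    exact Submodule.sum_mem _ fun i hi =>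
      mulOp_mul_derOp_pow_mem_Dfil _ (Nat.lt_succ_iff.mp (Finset.mem_range.mp hi))

lemma not_linearIndependent_pow_mul_pow (hR : R ∈ Dfil n) (hQ : Q ∈ Dfil q)
    (hc : Commute (derOp ^ (n + 1) + R) Q) :
    ¬ LinearIndependent ℂ fun p : ℕ × ℕ => (derOp ^ (n + 1) + R) ^ p.1 * Q ^ p.2 := by
  set P := derOp ^ (n + 1) + R
  have hP : P ∈ Dfil (n + 1) := add_mem (derOp_pow_mem_Dfil le_rfl) (Dfil_mono n.le_succ hR)
  -- the `(2q + 1)(2n + 3) > N + 1` products `Pⁱ Qʲ` with `i ≤ 2q`, `j ≤ 2n + 2` lie in `Dfil N`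
  set N := 4 * (n + 1) * q
  let C : Submodule ℂ (Module.End ℂ PS) := Dfil N ⊓ (Subalgebra.centralizer ℂ {P}).toSubmodule
  let Φ : Module.End ℂ PS →ₗ[ℂ] Fin (N + 1) → ℂ := LinearMap.pi fun k => coeff 0 ∘ₗ opCoeff k
  have hCΦ : Disjoint C (LinearMap.ker Φ) := by
    rw [Submodule.disjoint_def]
    rintro L ⟨hLN, hLc⟩ hLΦ
    refine eq_zero_of_commute hR hLN ((Subalgebra.mem_centralizer_iff ℂ).mp hLc P rfl)
      fun k hk => ?_
    simpa [Φ] using congrFun (LinearMap.mem_ker.mp hLΦ) ⟨k, by omega⟩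
  intro hli
  let v : Fin (2 * q + 1) × Fin (2 * (n + 1) + 1) → Module.End ℂ PS :=
    fun p => P ^ (p.1 : ℕ) * Q ^ (p.2 : ℕ)
  have hv : LinearIndependent ℂ v :=
    hli.comp (Prod.map Fin.val Fin.val) (Fin.val_injective.prodMap Fin.val_injective)
  have hvC : ∀ p, v p ∈ C := by
    rintro ⟨i, j⟩
    refine ⟨Dfil_mono ?_ (SetLike.mul_mem_graded (SetLike.pow_mem_graded i hP)
      (SetLike.pow_mem_graded j hQ)), ?_⟩
    · have hi := Nat.mul_le_mul_right (n + 1) (Nat.lt_succ_iff.mp i.2)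
      have hj := Nat.mul_le_mul_right q (Nat.lt_succ_iff.mp j.2)
      simp only [smul_eq_mul, N]
      nlinarith
    · refine (Subalgebra.mem_centralizer_iff ℂ).mpr ?_
      rintro _ rfl
      exact (((Commute.refl P).pow_right i).mul_right (hc.pow_right j)).eq
  have hcard := (hv.map (hCΦ.mono_left (Submodule.span_le.mpr
    (Set.range_subset_iff.mpr hvC)))).fintype_card_le_finrank
  simp only [Fintype.card_prod, Fintype.card_fin, Module.finrank_fin_fun, N] at hcard
  nlinarith

end Centralizer

lemma MonicD.exists_eq_derOp_pow_add {P : Module.End ℂ PS} (hP : MonicD P) (hpos : 0 < ordD P) :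
    ∃ n, ∃ R ∈ Dfil n, P = derOp ^ (n + 1) + R := by
  obtain ⟨n, hn⟩ := Nat.exists_eq_add_one_of_ne_zero hpos.ne'
  have h := hP.2
  rw [if_neg hpos.ne', hn, Nat.add_sub_cancel] at h
  exact ⟨n, _, h, by abel⟩

lemma not_linearIndependent_pow_mul_pow_of_monicD {P Q : Module.End ℂ PS} (hP : MonicD P)
    (hpos : 0 < ordD P) (hQ : Q ∈ DiffOps) (hc : Commute P Q) :
    ¬ LinearIndependent ℂ fun p : ℕ × ℕ => P ^ p.1 * Q ^ p.2 := by
  obtain ⟨n, R, hR, rfl⟩ := hP.exists_eq_derOp_pow_add hpos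
  obtain ⟨q, hq⟩ := exists_mem_Dfil_of_mem_DiffOps hQ
  exact not_linearIndependent_pow_mul_pow hR hq hc

lemma exists_eval2_eq_zero_of_not_linearIndependent {A : Type*} [Ring A] [Algebra ℂ A] {P Q : A}
    (h : ¬ LinearIndependent ℂ fun p : ℕ × ℕ => P ^ p.1 * Q ^ p.2) :
    ∃ F : MvPolynomial (Fin 2) ℂ, F ≠ 0 ∧ eval2 F P Q = 0 := by
  let e : ℕ × ℕ → Fin 2 →₀ ℕ := fun p => Finsupp.single 0 p.1 + Finsupp.single 1 p.2
  have hinj : Function.Injective e := fun p p' hp =>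
    Prod.ext (by simpa [e] using congrArg (· 0) hp) (by simpa [e] using congrArg (· 1) hp)
  have hmon : ¬ LinearIndependent ℂ fun m : Fin 2 →₀ ℕ => P ^ m 0 * Q ^ m 1 := fun hli =>
    h (by simpa [Function.comp_def, e] using hli.comp e hinj)
  obtain ⟨f, hf, hne⟩ := not_linearIndependent_iff_finsupp.mp hmon
  exact ⟨AddMonoidAlgebra.ofCoeff f, fun h => hne (congrArg AddMonoidAlgebra.coeff h), hf⟩

/-- **Burchnall–Chaundy.** Every pair of commuting differential operators with
coefficients in `ℂ[[x]]`, at least one of which is monic of positive order, is algebraically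
dependent over ℂ. -/
theorem burchnall_chaundy (P Q : Module.End ℂ PS)
    (hP : P ∈ DiffOps) (hQ : Q ∈ DiffOps)
    (hcomm : P * Q = Q * P)
    (hmonic : (MonicD P ∧ 0 < ordD P) ∨ (MonicD Q ∧ 0 < ordD Q)) :
    ∃ F : MvPolynomial (Fin 2) ℂ, F ≠ 0 ∧ eval2 F P Q = 0 := by
  refine exists_eval2_eq_zero_of_not_linearIndependent fun hli => ?_
  rcases hmonic with ⟨hPm, hPpos⟩ | ⟨hQm, hQpos⟩
  · exact not_linearIndependent_pow_mul_pow_of_monicD hPm hPpos hQ hcomm hli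
  · refine not_linearIndependent_pow_mul_pow_of_monicD hQm hQpos hP hcomm.symm ?_
    have hswap : (fun p : ℕ × ℕ => Q ^ p.1 * P ^ p.2) = (fun p => P ^ p.1 * Q ^ p.2) ∘ Prod.swap :=
      funext fun p => (Commute.pow_pow hcomm p.2 p.1).eq.symm
    rw [hswap]
    exact hli.comp _ Prod.swap_injective
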